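/- arXiv:2301.11260 — 4 statements merged into one kernel-verified Lean document; each statement's English description precedes it below -/
import Mathlib

section
/- Let B ⊆ {1,...,n} be a feasible basis of LP(c,A,b) (so |B| = m, A_B is invertible and A_B^{-1} b ≥ 0), let N = {1,...,n} \ B, let x be the basic solution associated with B, and let r = c − A^T (A_B^{-1})^T c_B be the reduced cost vector of c at B. Let x* = (x*_1,...,x*_n) be an optimal solution of LP(c,A,b). Then r_B = 0 and c^T x − c^T x* ≤ (max_{i∈{1,...,n}} x*_i) · Σ_{i∈N} max(−r_i, 0). -/
open MeasureTheory Matrix Finset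

namespace MOMPaper

variable {n m d : ℕ}

/-- A point is feasible for the standard-form LP min cᵀx s.t. Ax = b, x ≥ 0. -/
def Feasible (A : Matrix (Fin m) (Fin n) ℝ) (b : Fin m → ℝ) (x : Fin n → ℝ) : Prop :=
  A.mulVec x = b ∧ ∀ i, 0 ≤ x i

/-- x is an optimal solution of LP(c,A,b). -/
def IsOptimal (c : Fin n → ℝ) (A : Matrix (Fin m) (Fin n) ℝ) (b : Fin m → ℝ)
    (x : Fin n → ℝ) : Prop :=
  Feasible A b x ∧ ∀ y, Feasible A b y → c ⬝ᵥ x ≤ c ⬝ᵥ y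

/-- Column submatrix A_B, where the basis B is given by an enumeration β : Fin m → Fin n. -/
def subCols (A : Matrix (Fin m) (Fin n) ℝ) (β : Fin m → Fin n) : Matrix (Fin m) (Fin m) ℝ :=
  A.submatrix id β

/-- Reduced cost vector r = c − Aᵀ (A_B⁻¹)ᵀ c_B. -/
noncomputable def reducedCost (c : Fin n → ℝ) (A : Matrix (Fin m) (Fin n) ℝ)
    (β : Fin m → Fin n) : Fin n → ℝ :=
  c - (Aᵀ).mulVec ((((subCols A β)⁻¹)ᵀ).mulVec (c ∘ β))

/-- Basic solution associated with the basis β: x_B = A_B⁻¹ b, x_N = 0. -/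
noncomputable def basicSol (A : Matrix (Fin m) (Fin n) ℝ) (b : Fin m → ℝ)
    (β : Fin m → Fin n) : Fin n → ℝ :=
  fun i => if h : ∃ k, β k = i then ((subCols A β)⁻¹.mulVec b) h.choose else 0

/-- at a feasible basis B, the reduced cost vanishes on B and
    cᵀx − cᵀx* ≤ (max_i x*_i) · Σ_{i∈N} (−r_i)₊. -/
theorem reducedCost_basic_bound
    (hn : 0 < n)
    (c : Fin n → ℝ) (A : Matrix (Fin m) (Fin n) ℝ) (b : Fin m → ℝ)
    (β : Fin m → Fin n) (hβ : Function.Injective β)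
    (hinv : IsUnit (subCols A β).det)
    (hfeasB : ∀ k, 0 ≤ ((subCols A β)⁻¹.mulVec b) k)
    (x : Fin n → ℝ) (hx : x = basicSol A b β)
    (r : Fin n → ℝ) (hr : r = reducedCost c A β)
    (xstar : Fin n → ℝ) (hopt : IsOptimal c A b xstar) :
    (∀ k, r (β k) = 0) ∧
    c ⬝ᵥ x - c ⬝ᵥ xstar ≤
      (Finset.univ.sup' (Finset.univ_nonempty_iff.mpr ⟨⟨0, hn⟩⟩) xstar) *
        ∑ i ∈ Finset.univ \ Finset.image β Finset.univ, max (-(r i)) 0 := by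
  subst hx hr
  set M := subCols A β with hM
  have hMinv : M⁻¹ * M = 1 := Matrix.nonsing_inv_mul M hinv
  have hinvM : M * M⁻¹ = 1 := Matrix.mul_nonsing_inv M hinv
  have hxval : ∀ k, basicSol A b β (β k) = (M⁻¹.mulVec b) k := by
    intro k
    have h : ∃ k', β k' = β k := ⟨k, rfl⟩
    simp only [basicSol, dif_pos h, ← hM]
    rw [hβ h.choose_spec]
  have hxzero : ∀ i, (¬ ∃ k, β k = i) → basicSol A b β i = 0 := by
    intro i hi; simp [basicSol, dif_neg hi]
  have key : ∀ j k, (M⁻¹ * A) j (β k) = (1 : Matrix (Fin m) (Fin m) ℝ) j k := by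
    intro j k
    rw [← hMinv]
    simp [Matrix.mul_apply, hM, subCols]
  have hrB : ∀ k, reducedCost c A β (β k) = 0 := by
    intro k
    have h1 : (Aᵀ).mulVec (((M⁻¹)ᵀ).mulVec (c ∘ β)) (β k) = c (β k) := by
      have he : (Aᵀ).mulVec (((M⁻¹)ᵀ).mulVec (c ∘ β)) = ((M⁻¹ * A)ᵀ).mulVec (c ∘ β) := by
        rw [Matrix.transpose_mul, ← Matrix.mulVec_mulVec]
      rw [he]
      simp only [Matrix.mulVec, dotProduct, Matrix.transpose_apply]
      calc ∑ j, (M⁻¹ * A) j (β k) * (c ∘ β) j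
          = ∑ j, (1 : Matrix (Fin m) (Fin m) ℝ) j k * c (β j) := by
            refine Finset.sum_congr rfl fun j _ => by rw [key j k]; rfl
        _ = c (β k) := by simp [Matrix.one_apply]
    simp only [reducedCost, Pi.sub_apply, ← hM]
    rw [h1, sub_self]
  have hAx : A.mulVec (basicSol A b β) = b := by
    funext j
    have h0 : A.mulVec (basicSol A b β) j = ∑ i, A j i * basicSol A b β i := rfl
    rw [h0, ← Finset.sum_subset (Finset.subset_univ (Finset.image β Finset.univ))]
    · rw [Finset.sum_image (fun a _ a' _ h => hβ h)]
      have h1 : ∑ k, A j (β k) * basicSol A b β (β k)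
          = ∑ k, M j k * (M⁻¹.mulVec b) k := by
        refine Finset.sum_congr rfl fun k _ => ?_
        rw [hxval k]; rfl
      have h2 : ∑ k, M j k * (M⁻¹.mulVec b) k = (M * M⁻¹).mulVec b j := by
        rw [← Matrix.mulVec_mulVec]; rfl
      rw [h1, h2, hinvM, Matrix.one_mulVec]
    · intro i _ hi
      have : ¬ ∃ k, β k = i := by
        intro ⟨k, hk⟩
        exact hi (Finset.mem_image.mpr ⟨k, Finset.mem_univ k, hk⟩)
      rw [hxzero i this, mul_zero]
  have hdot : ∀ y, A.mulVec y = b →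
      c ⬝ᵥ y = reducedCost c A β ⬝ᵥ y + (c ∘ β) ⬝ᵥ (M⁻¹.mulVec b) := by
    intro y hy
    have h1 : (Aᵀ).mulVec (((M⁻¹)ᵀ).mulVec (c ∘ β)) ⬝ᵥ y
        = (c ∘ β) ⬝ᵥ (M⁻¹.mulVec b) := by
      rw [Matrix.mulVec_transpose, ← Matrix.dotProduct_mulVec, hy,
        Matrix.mulVec_transpose, ← Matrix.dotProduct_mulVec]
    simp only [reducedCost, sub_dotProduct, ← hM, h1]
    ring
  obtain ⟨⟨hAxs, hxs_nonneg⟩, hopt'⟩ := hopt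
  have hrx : reducedCost c A β ⬝ᵥ basicSol A b β = 0 := by
    apply Finset.sum_eq_zero
    intro i _
    by_cases h : ∃ k, β k = i
    · obtain ⟨k, rfl⟩ := h
      rw [hrB k, zero_mul]
    · rw [hxzero i h, mul_zero]
  refine ⟨hrB, ?_⟩
  have hdiff : c ⬝ᵥ basicSol A b β - c ⬝ᵥ xstar
      = ∑ i, (-(reducedCost c A β i)) * xstar i := by
    rw [hdot _ hAx, hdot _ hAxs, hrx]
    simp only [dotProduct, neg_mul, Finset.sum_neg_distrib]
    ring
  rw [hdiff]
  set S := Finset.univ \ Finset.image β Finset.univ with hS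
  have hsum : ∑ i, (-(reducedCost c A β i)) * xstar i
      = ∑ i ∈ S, (-(reducedCost c A β i)) * xstar i := by
    symm
    apply Finset.sum_subset (Finset.subset_univ S)
    intro i _ hi
    have : ∃ k, β k = i := by
      have : i ∈ Finset.image β Finset.univ := by
        by_contra h
        exact hi (Finset.mem_sdiff.mpr ⟨Finset.mem_univ i, h⟩)
      obtain ⟨k, _, hk⟩ := Finset.mem_image.mp this
      exact ⟨k, hk⟩
    obtain ⟨k, rfl⟩ := this
    rw [hrB k, neg_zero, zero_mul]
  rw [hsum]
  set M0 := Finset.univ.sup' (Finset.univ_nonempty_iff.mpr ⟨⟨0, hn⟩⟩) xstar with hM0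
  calc ∑ i ∈ S, (-(reducedCost c A β i)) * xstar i
      ≤ ∑ i ∈ S, max (-(reducedCost c A β i)) 0 * M0 := by
        refine Finset.sum_le_sum fun i _ => ?_
        calc (-(reducedCost c A β i)) * xstar i
            ≤ max (-(reducedCost c A β i)) 0 * xstar i :=
              mul_le_mul_of_nonneg_right (le_max_left _ _) (hxs_nonneg i)
          _ ≤ max (-(reducedCost c A β i)) 0 * M0 :=
              mul_le_mul_of_nonneg_left
                (Finset.le_sup' xstar (Finset.mem_univ i)) (le_max_right _ _)
    _ = M0 * ∑ i ∈ S, max (-(reducedCost c A β i)) 0 := by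
        rw [Finset.mul_sum]
        exact Finset.sum_congr rfl fun i _ => mul_comm _ _

end MOMPaper
end

section
/- Suppose the feasible region {x ≥ 0 : A x = b} is contained in the Euclidean unit ball. Let B ⊆ {1,...,n} be a feasible basis with basic solution x* (x*_B = A_B^{-1} b, x*_N = 0, where N = {1,...,n} \ B). Let ĉ ∈ ℝ^n, let r̂ = ĉ − A^T (A_B^{-1})^T ĉ_B be the reduced cost of ĉ at B, and let x̂ be an optimal solution of LP(ĉ,A,b). Then ĉ^T x* − ĉ^T x̂ ≤ Σ_{i∈N} max(1 − r̂_i, 0). -/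
open MeasureTheory Matrix Finset

namespace MOMPaper

variable {n m d : ℕ}

/-- Euclidean norm of a vector. -/
noncomputable def l2norm {ι : Type*} [Fintype ι] (x : ι → ℝ) : ℝ :=
  Real.sqrt (∑ i, x i ^ 2)

/-- if the feasible region is contained in the unit ball, then for the
    basic solution x* at a feasible basis B and any optimal solution x̂ of LP(ĉ,A,b),
    ĉᵀx* − ĉᵀx̂ ≤ Σ_{i∈N} max(1 − r̂_i, 0). -/
theorem suboptimality_le_margin_violation
    (A : Matrix (Fin m) (Fin n) ℝ) (b : Fin m → ℝ)
    (hball : ∀ x, Feasible A b x → l2norm x ≤ 1)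
    (β : Fin m → Fin n) (hβ : Function.Injective β)
    (hinv : IsUnit (subCols A β).det)
    (hfeasB : ∀ k, 0 ≤ ((subCols A β)⁻¹.mulVec b) k)
    (xstar : Fin n → ℝ) (hxstar : xstar = basicSol A b β)
    (chat : Fin n → ℝ)
    (rhat : Fin n → ℝ) (hrhat : rhat = reducedCost chat A β)
    (xhat : Fin n → ℝ) (hxhat : IsOptimal chat A b xhat) :
    chat ⬝ᵥ xstar - chat ⬝ᵥ xhat ≤
      ∑ i ∈ Finset.univ \ Finset.image β Finset.univ, max (1 - rhat i) 0 := by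
  -- setup
  set S := subCols A β with hS
  set y : Fin m → ℝ := (((S)⁻¹)ᵀ).mulVec (chat ∘ β) with hy
  set w : Fin m → ℝ := (S)⁻¹.mulVec b with hw
  -- values of xstar
  have hxβ : ∀ k, xstar (β k) = w k := by
    intro k
    have h : ∃ k', β k' = β k := ⟨k, rfl⟩
    have hch : h.choose = k := hβ h.choose_spec
    simp [hxstar, basicSol, h, hch, hw, hS]
  have hx0 : ∀ i, (∀ k, β k ≠ i) → xstar i = 0 := by
    intro i hi
    have h : ¬ ∃ k, β k = i := by push_neg; exact hi
    simp [hxstar, basicSol, h]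
  -- A xstar = b
  have hAx : A.mulVec xstar = b := by
    funext j
    have hsub : ∀ i ∈ Finset.univ \ Finset.image β Finset.univ,
        A j i * xstar i = 0 := by
      intro i hi
      simp only [Finset.mem_sdiff, Finset.mem_image, Finset.mem_univ, true_and] at hi
      have : ∀ k, β k ≠ i := by intro k hk; exact hi ⟨k, hk⟩
      rw [hx0 i this, mul_zero]
    have h1 : A.mulVec xstar j = ∑ i ∈ Finset.image β Finset.univ, A j i * xstar i := by
      rw [Matrix.mulVec, dotProduct]
      exact (Finset.sum_subset (Finset.subset_univ _) (by
        intro i _ hi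
        exact hsub i (Finset.mem_sdiff.2 ⟨Finset.mem_univ _, hi⟩))).symm
    rw [h1, Finset.sum_image (fun a _ a' _ h => hβ h)]
    have : ∑ k, A j (β k) * xstar (β k) = (S.mulVec w) j := by
      rw [Matrix.mulVec, dotProduct]
      refine Finset.sum_congr rfl fun k _ => ?_
      rw [hxβ k]; rfl
    rw [this, hw, Matrix.mulVec_mulVec, Matrix.mul_nonsing_inv _ hinv, Matrix.one_mulVec]
  -- reduced cost zero on basis
  have hrβ : ∀ k, rhat (β k) = 0 := by
    intro k
    have h1 : (Aᵀ.mulVec y) (β k) = ((Sᵀ).mulVec y) k := by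
      rw [Matrix.mulVec, Matrix.mulVec, dotProduct, dotProduct]
      rfl
    have h2 : (Sᵀ).mulVec y = chat ∘ β := by
      rw [hy, Matrix.mulVec_mulVec, ← Matrix.transpose_mul, Matrix.nonsing_inv_mul _ hinv]
      simp
    rw [hrhat, reducedCost]
    show chat (β k) - (Aᵀ.mulVec y) (β k) = 0
    rw [h1, h2]
    simp
  -- decomposition of objective
  have hdecomp : ∀ x : Fin n → ℝ, chat ⬝ᵥ x = rhat ⬝ᵥ x + y ⬝ᵥ (A.mulVec x) := by
    intro x
    have : chat = rhat + Aᵀ.mulVec y := by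
      rw [hrhat, reducedCost]
      funext i
      simp [hy, hS]
    rw [this, add_dotProduct, Matrix.mulVec_transpose,
      ← Matrix.dotProduct_mulVec]
  have hfeas := hxhat.1
  have hAxh : A.mulVec xhat = b := hfeas.1
  -- rhat ⬝ᵥ xstar = 0
  have hrx : rhat ⬝ᵥ xstar = 0 := by
    rw [dotProduct]
    refine Finset.sum_eq_zero fun i _ => ?_
    by_cases h : ∃ k, β k = i
    · obtain ⟨k, rfl⟩ := h; rw [hrβ k, zero_mul]
    · push_neg at h; rw [hx0 i h, mul_zero]
  -- xhat in [0,1]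
  have hx01 : ∀ i, 0 ≤ xhat i ∧ xhat i ≤ 1 := by
    intro i
    have h0 := hfeas.2 i
    have hb := hball xhat hfeas
    simp only [l2norm] at hb
    have hsum : ∑ j, xhat j ^ 2 ≤ 1 := by
      have hnn : (0:ℝ) ≤ ∑ j, xhat j ^ 2 :=
        Finset.sum_nonneg fun j _ => sq_nonneg _
      have := Real.sq_sqrt hnn
      nlinarith [Real.sqrt_nonneg (∑ j, xhat j ^ 2)]
    have hsq : xhat i ^ 2 ≤ 1 :=
      le_trans (Finset.single_le_sum (fun j _ => sq_nonneg (xhat j)) (Finset.mem_univ i)) hsum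
    exact ⟨h0, by nlinarith⟩
  -- main computation
  have hmain : chat ⬝ᵥ xstar - chat ⬝ᵥ xhat = - (rhat ⬝ᵥ xhat) := by
    rw [hdecomp xstar, hdecomp xhat, hAx, hAxh, hrx]; ring
  rw [hmain]
  have hsplit : rhat ⬝ᵥ xhat = ∑ i ∈ Finset.univ \ Finset.image β Finset.univ,
      rhat i * xhat i := by
    rw [dotProduct]
    refine (Finset.sum_subset (Finset.sdiff_subset) ?_).symm
    intro i _ hi
    simp only [Finset.mem_sdiff, Finset.mem_univ, true_and, not_not] at hi
    obtain ⟨k, _, rfl⟩ := Finset.mem_image.1 hi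
    rw [hrβ k, zero_mul]
  rw [hsplit, ← Finset.sum_neg_distrib]
  refine Finset.sum_le_sum fun i _ => ?_
  obtain ⟨h0, h1⟩ := hx01 i
  rcases le_total (rhat i) 0 with h | h
  · have := le_max_left (1 - rhat i) 0
    nlinarith
  · have := le_max_right (1 - rhat i) 0
    nlinarith

end MOMPaper
end

section
/- Under the nondegeneracy, boundedness, and separability assumptions, run the optimality-driven perceptron algorithm on T samples D_1,...,D_T drawn i.i.d. from P, producing iterates Θ_1,...,Θ_{T+1} and decisions x_t that are optimal solutions of LP(Θ_t z_t, A_t, b_t). Then the number of time steps at which the algorithm's decision differs from the true optimal solution is bounded independently of T: #{t ∈ {1,...,T} : x*_t ≠ x_t} ≤ Θ̄² + σ̄²Θ̄²m²n, where x*_t is the optimal solution of LP(c_t, A_t, b_t). -/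
/-!
Novikoff's perceptron argument in the Frobenius inner product. An update `W = W_{t,i}` satisfies
`⟨Φ, W⟩ = r_i(Φ z)`, the reduced cost of `Φ z` at `i`; so it raises `⟨Θ*, Θ⟩` by at least `1`
and `‖Θ‖²` by `2 r_i(Θ z) + ‖W‖² ≤ 1 + (1 + σ̄² m)`. After `u` updates,
`u ≤ ⟨Θ*, Θ⟩ ≤ Θ̄ √(u (2 + σ̄² m))`, i.e. `u ≤ Θ̄² (2 + σ̄² m)`.
A mistake at round `t` forces an update in that round: otherwise every nonbasic reduced cost of
`Θ_t z_t` exceeds `1/2`, and `x*_t` is the unique optimum of the predicted LP.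
Finally `2 + σ̄² m ≤ 1 + σ̄² m² n`, because `σ̄ m ≥ ‖A_B⁻¹‖ ‖A_B‖ ≥ 1` and `n ≥ m + 1`;
when `n = m` every index is basic and no mistake occurs at all.
-/

open MeasureTheory Matrix Finset

namespace MOMPaper

variable {n m d : ℕ}

/-- Frobenius norm of a matrix. -/
noncomputable def frob {ι κ : Type*} [Fintype ι] [Fintype κ] (M : Matrix ι κ ℝ) : ℝ :=
  Real.sqrt (∑ i, ∑ j, M i j ^ 2)

/-- Largest singular value of a square matrix, i.e. its ℓ²-operator norm. -/
noncomputable def sigmaMax {ι : Type*} [Fintype ι] [DecidableEq ι]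
    (M : Matrix ι ι ℝ) : ℝ :=
  ‖Matrix.toEuclideanCLM (𝕜 := ℝ) M‖

/-- A data sample D = (c, A, b, z). -/
abbrev Samp (n m d : ℕ) : Type :=
  (Fin n → ℝ) × (Fin m → Fin n → ℝ) × (Fin m → ℝ) × (Fin d → ℝ)

def cOf (D : Samp n m d) : Fin n → ℝ := D.1
def AOf (D : Samp n m d) : Matrix (Fin m) (Fin n) ℝ := Matrix.of D.2.1
def bOf (D : Samp n m d) : Fin m → ℝ := D.2.2.1
def zOf (D : Samp n m d) : Fin d → ℝ := D.2.2.2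

/-- Indices of positive coordinates: the optimal basis B* of x*. -/
noncomputable def posSupport (x : Fin n → ℝ) : Finset (Fin n) :=
  Finset.univ.filter (fun i => 0 < x i)

/-- Canonical (increasing) enumeration of a finset of cardinality m. -/
noncomputable def enumOf [NeZero n] (B : Finset (Fin n)) : Fin m → Fin n :=
  if h : B.card = m then B.orderEmbOfFin h else
    fun _ => ⟨0, Nat.pos_of_ne_zero (NeZero.ne n)⟩

/-- Nondegeneracy of the sample D, whose unique optimal solution is xs. -/
def Nondeg (D : Samp n m d) (xs : Fin n → ℝ) : Prop :=
  IsOptimal (cOf D) (AOf D) (bOf D) xs ∧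
  (∀ y, IsOptimal (cOf D) (AOf D) (bOf D) y → y = xs) ∧
  (∀ γ : Fin m → Fin n, Function.Injective γ → IsUnit (subCols (AOf D) γ).det) ∧
  (posSupport xs).card = m

/-- Boundedness of the sample D (with optimal solution xs), with constant σ̄. -/
noncomputable def BoundedD [NeZero n] (σb : ℝ) (D : Samp n m d) (xs : Fin n → ℝ) : Prop :=
  sigmaMax ((subCols (AOf D) (enumOf (posSupport xs)))⁻¹) ≤ σb ∧
  l2norm (zOf D) ≤ 1 ∧
  (∀ i j, |AOf D i j| ≤ 1) ∧ (∀ i, |bOf D i| ≤ 1) ∧ (∀ i, |cOf D i| ≤ 1) ∧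
  (∀ x, Feasible (AOf D) (bOf D) x → l2norm x ≤ 1)

/-- Margin-violation loss l(D;Θ) = Σ_{i ∈ N*} max(1 − r̂_i, 0), where r̂ is the
    reduced cost of ĉ = Θz at the optimal basis B* of xs. -/
noncomputable def mloss [NeZero n] (Θ : Matrix (Fin n) (Fin d) ℝ) (D : Samp n m d)
    (xs : Fin n → ℝ) : ℝ :=
  ∑ i ∈ Finset.univ \ posSupport xs,
    max (1 - reducedCost (Θ.mulVec (zOf D)) (AOf D) (enumOf (posSupport xs)) i) 0

/-- The MOM objective (λ/2)‖Θ‖_F² + (1/T) Σ_t l(D_t;Θ). -/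
noncomputable def momObj [NeZero n] (lam : ℝ) (T : ℕ) (Ds : Fin T → Samp n m d)
    (xstar : Samp n m d → Fin n → ℝ) (Θ : Matrix (Fin n) (Fin d) ℝ) : ℝ :=
  lam / 2 * (frob Θ) ^ 2 + (1 / (T : ℝ)) * ∑ t, mloss Θ (Ds t) (xstar (Ds t))

/-- The event (on a new sample D) that xs(D) is the unique optimal solution of
    LP(ĉ, A, b) with predicted objective ĉ = Θ z, i.e. "x*_new = x̂_new". -/
def PredictsOpt (Θ : Matrix (Fin n) (Fin d) ℝ) (D : Samp n m d) (xs : Fin n → ℝ) : Prop :=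
  IsOptimal (Θ.mulVec (zOf D)) (AOf D) (bOf D) xs ∧
  ∀ y, IsOptimal (Θ.mulVec (zOf D)) (AOf D) (bOf D) y → y = xs

/-- The perceptron update matrix W_{t,i}: row i is zᵀ, rows indexed by B* form the
    block −(A_{B*}⁻¹ A_{·i}) zᵀ, and all other rows are zero. -/
noncomputable def percW (D : Samp n m d) (β : Fin m → Fin n) (i : Fin n) :
    Matrix (Fin n) (Fin d) ℝ :=
  Matrix.of fun i' j =>
    if i' = i then zOf D j
    else if h : ∃ k, β k = i' then
      -(((subCols (AOf D) β)⁻¹.mulVec (fun k => AOf D k i)) h.choose) * zOf D j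
    else 0

/-- The inner loop of the optimality-driven perceptron: for each i ∈ N* in order,
    if the reduced cost r^(i)_i of the current Θ_tmp at B* is ≤ 1/2, add W_{t,i}. -/
noncomputable def percInner [NeZero n] (D : Samp n m d) (xs : Fin n → ℝ)
    (Θ : Matrix (Fin n) (Fin d) ℝ) : Matrix (Fin n) (Fin d) ℝ :=
  (List.finRange n).foldl
    (fun Θtmp i =>
      if i ∉ posSupport xs ∧
          reducedCost (Θtmp.mulVec (zOf D)) (AOf D) (enumOf (posSupport xs)) i ≤ 1 / 2
      then Θtmp + percW D (enumOf (posSupport xs)) i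
      else Θtmp) Θ

/-- Iterates of the optimality-driven perceptron (Algorithm 3): Θ_1 = 0 and
    Θ_{t+1} is obtained from Θ_t by the inner loop on sample D_t;
    here `percIter xstar Ds t` is Θ_{t+1}. -/
noncomputable def percIter [NeZero n] (xstar : Samp n m d → Fin n → ℝ)
    {T : ℕ} (Ds : Fin T → Samp n m d) : ℕ → Matrix (Fin n) (Fin d) ℝ
  | 0 => 0
  | t + 1 =>
    if h : t < T then
      percInner (Ds ⟨t, h⟩) (xstar (Ds ⟨t, h⟩)) (percIter xstar Ds t)
    else percIter xstar Ds t


section Frobenius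

variable {ι κ : Type*} [Fintype ι] [Fintype κ]

def frobInner (Θ Φ : Matrix ι κ ℝ) : ℝ := ∑ i, ∑ j, Θ i j * Φ i j

theorem frobInner_zero_right (Θ : Matrix ι κ ℝ) : frobInner Θ 0 = 0 := by
  simp [frobInner]

theorem frobInner_add_right (Θ Φ Ψ : Matrix ι κ ℝ) :
    frobInner Θ (Φ + Ψ) = frobInner Θ Φ + frobInner Θ Ψ := by
  simp [frobInner, mul_add, sum_add_distrib]

theorem frobInner_add_self (Θ Φ : Matrix ι κ ℝ) :
    frobInner (Θ + Φ) (Θ + Φ) = frobInner Θ Θ + 2 * frobInner Θ Φ + frobInner Φ Φ := by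
  simp only [frobInner, Matrix.add_apply, mul_sum, ← sum_add_distrib]
  exact sum_congr rfl fun i _ => sum_congr rfl fun j _ => by ring

theorem frobInner_self_nonneg (Θ : Matrix ι κ ℝ) : 0 ≤ frobInner Θ Θ :=
  sum_nonneg fun _ _ => sum_nonneg fun _ _ => mul_self_nonneg _

theorem frob_sq (Θ : Matrix ι κ ℝ) : frob Θ ^ 2 = frobInner Θ Θ := by
  simp only [frob, frobInner, ← sq]
  exact Real.sq_sqrt (sum_nonneg fun _ _ => sum_nonneg fun _ _ => sq_nonneg _)

theorem frobInner_sq_le (Θ Φ : Matrix ι κ ℝ) :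
    frobInner Θ Φ ^ 2 ≤ frobInner Θ Θ * frobInner Φ Φ := by
  simpa [frobInner, Fintype.sum_prod_type, sq] using
    sum_mul_sq_le_sq_mul_sq univ (fun p : ι × κ => Θ p.1 p.2) (fun p => Φ p.1 p.2)

theorem frobInner_vecMulVec (Θ : Matrix ι κ ℝ) (w : ι → ℝ) (z : κ → ℝ) :
    frobInner Θ (vecMulVec w z) = w ⬝ᵥ (Θ *ᵥ z) := by
  simp only [frobInner, vecMulVec_apply, dotProduct, mulVec, mul_sum]
  exact sum_congr rfl fun i _ => sum_congr rfl fun j _ => by ring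

theorem frobInner_vecMulVec_self (w : ι → ℝ) (z : κ → ℝ) :
    frobInner (vecMulVec w z) (vecMulVec w z) = (w ⬝ᵥ w) * (z ⬝ᵥ z) := by
  simp only [frobInner, vecMulVec_apply, dotProduct, sum_mul_sum]
  exact sum_congr rfl fun i _ => sum_congr rfl fun j _ => by ring

end Frobenius

section EuclideanNorm

variable {ι κ : Type*} [Fintype ι] [Fintype κ]

theorem l2norm_sq (x : ι → ℝ) : l2norm x ^ 2 = x ⬝ᵥ x := by
  rw [l2norm, Real.sq_sqrt (sum_nonneg fun _ _ => sq_nonneg _)]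
  simp [dotProduct, sq]

theorem l2norm_eq_norm (x : ι → ℝ) : l2norm x = ‖WithLp.toLp 2 x‖ := by
  simp [l2norm, EuclideanSpace.norm_eq]

theorem sum_sq_le_card (x : ι → ℝ) (hx : ∀ i, |x i| ≤ 1) :
    ∑ i, x i ^ 2 ≤ Fintype.card ι :=
  calc ∑ i, x i ^ 2 ≤ ∑ _i : ι, (1 : ℝ) := sum_le_sum fun i _ => by
        simpa [sq_abs] using pow_le_one₀ (abs_nonneg (x i)) (hx i) (n := 2)
    _ = Fintype.card ι := by simp

theorem l2norm_le_sqrt_card (x : ι → ℝ) (hx : ∀ i, |x i| ≤ 1) :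
    l2norm x ≤ √(Fintype.card ι) :=
  Real.sqrt_le_sqrt (sum_sq_le_card x hx)

theorem l2norm_mulVec_le_frob (M : Matrix ι κ ℝ) (x : κ → ℝ) :
    l2norm (M *ᵥ x) ≤ frob M * l2norm x := by
  have hM : 0 ≤ ∑ i, ∑ j, M i j ^ 2 := by positivity
  rw [l2norm, frob, l2norm, ← Real.sqrt_mul hM, sum_mul]
  exact Real.sqrt_le_sqrt (sum_le_sum fun i _ => sum_mul_sq_le_sq_mul_sq univ (M i) x)

theorem frob_le_of_abs_le_one (M : Matrix ι κ ℝ) (hM : ∀ i j, |M i j| ≤ 1) :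
    frob M ≤ √(Fintype.card ι * Fintype.card κ) := by
  refine Real.sqrt_le_sqrt ?_
  calc ∑ i, ∑ j, M i j ^ 2 ≤ ∑ _i : ι, (Fintype.card κ : ℝ) :=
        sum_le_sum fun i _ => sum_sq_le_card (M i) (hM i)
    _ = Fintype.card ι * Fintype.card κ := by simp

variable [DecidableEq ι]

theorem l2norm_mulVec_le (M : Matrix ι ι ℝ) (x : ι → ℝ) :
    l2norm (M *ᵥ x) ≤ sigmaMax M * l2norm x := by
  rw [l2norm_eq_norm, l2norm_eq_norm, ← toEuclideanCLM_toLp]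
  exact (toEuclideanCLM (𝕜 := ℝ) M).le_opNorm (WithLp.toLp 2 x)

theorem sigmaMax_le_frob (M : Matrix ι ι ℝ) : sigmaMax M ≤ frob M :=
  ContinuousLinearMap.opNorm_le_bound _ (Real.sqrt_nonneg _) fun x => by
    have h := l2norm_mulVec_le_frob M x.ofLp
    rwa [l2norm_eq_norm, l2norm_eq_norm, ← toEuclideanCLM_toLp, WithLp.toLp_ofLp] at h

theorem one_le_sigmaMax_inv_mul [Nonempty ι] (M : Matrix ι ι ℝ) (hM : IsUnit M.det) :
    1 ≤ sigmaMax M⁻¹ * sigmaMax M :=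
  calc (1 : ℝ) = ‖toEuclideanCLM (𝕜 := ℝ) (M⁻¹ * M)‖ := by
        rw [nonsing_inv_mul M hM, map_one, norm_one]
    _ ≤ sigmaMax M⁻¹ * sigmaMax M := by
        rw [_root_.map_mul]
        exact norm_mul_le _ _

end EuclideanNorm

section ReducedCost

variable (c : Fin n → ℝ) (A : Matrix (Fin m) (Fin n) ℝ) (β : Fin m → Fin n)

/-- The `i`-th column of the simplex tableau at the basis `β`. -/
noncomputable def basisCoords (i : Fin n) : Fin m → ℝ := (subCols A β)⁻¹ *ᵥ fun k => A k i

theorem reducedCost_apply (i : Fin n) :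
    reducedCost c A β i = c i - (c ∘ β) ⬝ᵥ basisCoords A β i := by
  rw [reducedCost, Pi.sub_apply, mulVec_transpose, mulVec_transpose, basisCoords,
    dotProduct_mulVec]
  rfl

theorem reducedCost_basis (hdet : IsUnit (subCols A β).det) (k : Fin m) :
    reducedCost c A β (β k) = 0 := by
  have hcol : (fun l => A l (β k)) = subCols A β *ᵥ Pi.single k 1 := by
    rw [mulVec_single_one]; rfl
  rw [reducedCost_apply, basisCoords, hcol, mulVec_mulVec, nonsing_inv_mul _ hdet, one_mulVec,
    dotProduct_single_one, Function.comp_apply, sub_self]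

theorem dotProduct_reducedCost (y : Fin n → ℝ) :
    reducedCost c A β ⬝ᵥ y =
      c ⬝ᵥ y - ((subCols A β)⁻¹ᵀ *ᵥ (c ∘ β)) ⬝ᵥ (A *ᵥ y) := by
  rw [reducedCost, sub_dotProduct, mulVec_transpose, dotProduct_mulVec]

end ReducedCost

theorem mulVec_eq_subCols_mulVec (A : Matrix (Fin m) (Fin n) ℝ) {β : Fin m → Fin n}
    (hβ : Function.Injective β) {v : Fin n → ℝ} (hv : ∀ i ∉ Set.range β, v i = 0) :
    A *ᵥ v = subCols A β *ᵥ (v ∘ β) := by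
  funext k
  refine (Fintype.sum_of_injective β hβ _ _ (fun i hi => ?_) fun l => rfl).symm
  simp [hv i hi]

theorem eq_zero_of_mulVec_eq_zero_of_support (A : Matrix (Fin m) (Fin n) ℝ)
    {β : Fin m → Fin n} (hβ : Function.Injective β) (hdet : IsUnit (subCols A β).det)
    {v : Fin n → ℝ} (hv : ∀ i ∉ Set.range β, v i = 0) (hAv : A *ᵥ v = 0) : v = 0 := by
  have hvβ : v ∘ β = 0 :=
    eq_zero_of_mulVec_eq_zero hdet.ne_zero (mulVec_eq_subCols_mulVec A hβ hv ▸ hAv)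
  funext i
  by_cases hi : i ∈ Set.range β
  · obtain ⟨k, rfl⟩ := hi
    exact congrFun hvβ k
  · exact hv i hi

theorem mem_posSupport {x : Fin n → ℝ} {i : Fin n} : i ∈ posSupport x ↔ 0 < x i := by
  simp [posSupport]

theorem eq_zero_of_notMem_posSupport {x : Fin n → ℝ} (hx : ∀ i, 0 ≤ x i) {i : Fin n}
    (hi : i ∉ posSupport x) : x i = 0 :=
  le_antisymm (not_lt.1 (mem_posSupport.not.1 hi)) (hx i)

section Enumeration

variable [NeZero n] {B : Finset (Fin n)}

theorem enumOf_eq (h : B.card = m) : (enumOf B : Fin m → Fin n) = B.orderEmbOfFin h := by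
  rw [enumOf, dif_pos h]

theorem injective_enumOf (h : B.card = m) : Function.Injective (enumOf B : Fin m → Fin n) := by
  rw [enumOf_eq h]
  exact (B.orderEmbOfFin h).injective

theorem range_enumOf (h : B.card = m) : Set.range (enumOf B : Fin m → Fin n) = B := by
  rw [enumOf_eq h, range_orderEmbOfFin]

end Enumeration

/-- For feasible `y`, `c ⬝ᵥ y - c ⬝ᵥ xs = r ⬝ᵥ y` with `r ≥ 0`, and `r ⬝ᵥ y = 0` forces `y`
to vanish off the basis, where `A_B` determines it. -/
theorem eq_of_isOptimal_of_reducedCost_pos [NeZero n] {c : Fin n → ℝ}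
    {A : Matrix (Fin m) (Fin n) ℝ} {b : Fin m → ℝ} {xs x : Fin n → ℝ}
    (hxs : Feasible A b xs) (hcard : (posSupport xs).card = m)
    (hdet : IsUnit (subCols A (enumOf (posSupport xs))).det)
    (hrc : ∀ i ∉ posSupport xs, 0 < reducedCost c A (enumOf (posSupport xs)) i)
    (hx : IsOptimal c A b x) : x = xs := by
  set β : Fin m → Fin n := enumOf (posSupport xs)
  set r := reducedCost c A β
  have hrange : Set.range β = posSupport xs := range_enumOf hcard
  have hr_basic : ∀ i ∈ posSupport xs, r i = 0 := by
    intro i hi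
    obtain ⟨k, rfl⟩ : i ∈ Set.range β := hrange ▸ hi
    exact reducedCost_basis c A β hdet k
  have hterm : ∀ i, 0 ≤ r i * x i := fun i => by
    by_cases hi : i ∈ posSupport xs
    · simp [hr_basic i hi]
    · exact mul_nonneg (hrc i hi).le (hx.1.2 i)
  have hr_xs : r ⬝ᵥ xs = 0 := sum_eq_zero fun i _ => by
    by_cases hi : i ∈ posSupport xs
    · simp [hr_basic i hi]
    · simp [eq_zero_of_notMem_posSupport hxs.2 hi]
  have hr_x : r ⬝ᵥ x = 0 := by
    refine le_antisymm ?_ (sum_nonneg fun i _ => hterm i)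
    have := hx.2 xs hxs
    rw [← hr_xs, dotProduct_reducedCost, dotProduct_reducedCost, hx.1.1, hxs.1]
    linarith
  have hx_nonbasic : ∀ i ∉ posSupport xs, x i = 0 := fun i hi =>
    (mul_eq_zero.1 ((sum_eq_zero_iff_of_nonneg fun i _ => hterm i).1 hr_x i (mem_univ i))
      ).resolve_left (hrc i hi).ne'
  refine sub_eq_zero.1 (eq_zero_of_mulVec_eq_zero_of_support A (injective_enumOf hcard) hdet
    (fun i hi => ?_) (by rw [mulVec_sub, hx.1.1, hxs.1, sub_self]))
  rw [hrange, Finset.mem_coe] at hi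
  simp [hx_nonbasic i hi, eq_zero_of_notMem_posSupport hxs.2 hi]

theorem extend_dotProduct {α γ : Type*} [Fintype α] [Fintype γ] {f : α → γ}
    (hf : Function.Injective f) (v : α → ℝ) (g : γ → ℝ) :
    Function.extend f v 0 ⬝ᵥ g = v ⬝ᵥ (g ∘ f) := by
  refine (Fintype.sum_of_injective f hf _ _ (fun j hj => ?_) fun a => ?_).symm
  · simp [Function.extend_apply' _ _ _ hj]
  · simp [hf.extend_apply]

section UpdateMatrix

variable (D : Samp n m d) (β : Fin m → Fin n) (i : Fin n)

theorem percW_eq_vecMulVec (hi : i ∉ Set.range β) :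
    percW D β i =
      vecMulVec (Pi.single i 1 - Function.extend β (basisCoords (AOf D) β i) 0) (zOf D) := by
  ext i' j
  by_cases h : i' = i
  · subst h
    simp [percW, vecMulVec_apply, Function.extend_apply' _ _ _ hi]
  · simp only [percW, vecMulVec_apply, of_apply, h, Function.extend_def, if_false, Pi.sub_apply,
      Pi.single_apply, Pi.zero_apply, basisCoords]
    split_ifs <;> simp

theorem frobInner_percW (hβ : Function.Injective β) (hi : i ∉ Set.range β)
    (Θ : Matrix (Fin n) (Fin d) ℝ) :
    frobInner Θ (percW D β i) = reducedCost (Θ *ᵥ zOf D) (AOf D) β i := by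
  rw [percW_eq_vecMulVec D β i hi, frobInner_vecMulVec, sub_dotProduct, single_one_dotProduct,
    extend_dotProduct hβ, dotProduct_comm, reducedCost_apply]

theorem frobInner_percW_self (hβ : Function.Injective β) (hi : i ∉ Set.range β) :
    frobInner (percW D β i) (percW D β i) =
      (1 + basisCoords (AOf D) β i ⬝ᵥ basisCoords (AOf D) β i) * (zOf D ⬝ᵥ zOf D) := by
  rw [percW_eq_vecMulVec D β i hi, frobInner_vecMulVec_self]
  congr 1
  set v := basisCoords (AOf D) β i
  have hext : Function.extend β v 0 i = 0 := Function.extend_apply' _ _ _ hi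
  have hvβ : Function.extend β v 0 ∘ β = v := funext (hβ.extend_apply v 0)
  simp only [sub_dotProduct, dotProduct_sub, single_one_dotProduct, dotProduct_single_one,
    extend_dotProduct hβ, hvβ, hext, Pi.sub_apply, Pi.single_eq_same]
  ring

end UpdateMatrix

section Advances

variable {V : Type*} (Φ Ψ : V → ℝ) (K : ℝ)

def Advances (u : ℕ) (x y : V) : Prop :=
  Φ x + u ≤ Φ y ∧ Ψ y ≤ Ψ x + u * K

variable {Φ Ψ K}

theorem Advances.refl (x : V) : Advances Φ Ψ K 0 x x := by
  simp [Advances]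

theorem Advances.trans {u v : ℕ} {x y z : V} (hxy : Advances Φ Ψ K u x y)
    (hyz : Advances Φ Ψ K v y z) : Advances Φ Ψ K (u + v) x z := by
  obtain ⟨h₁, h₂⟩ := hxy
  obtain ⟨h₃, h₄⟩ := hyz
  constructor <;> push_cast <;> linarith [add_mul (u : ℝ) v K]

theorem Advances.foldl_ite {ι : Type*} (p : V → ι → Prop) [∀ x i, Decidable (p x i)]
    (f : V → ι → V) (hf : ∀ x i, p x i → Advances Φ Ψ K 1 x (f x i)) (l : List ι)
    (x : V) :
    ∃ u, Advances Φ Ψ K u x (l.foldl (fun y i => if p y i then f y i else y) x) ∧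
      ((∃ i ∈ l, p x i) → 1 ≤ u) := by
  induction l generalizing x with
  | nil => exact ⟨0, Advances.refl x, by simp⟩
  | cons i l ih =>
    rw [List.foldl_cons]
    by_cases hi : p x i
    · obtain ⟨u, hu, -⟩ := ih (f x i)
      rw [if_pos hi]
      exact ⟨1 + u, (hf x i hi).trans hu, fun _ => Nat.le_add_right 1 u⟩
    · obtain ⟨u, hu, hl⟩ := ih x
      rw [if_neg hi]
      refine ⟨u, hu, fun ⟨j, hj, hpj⟩ => hl ⟨j, ?_, hpj⟩⟩
      rcases List.mem_cons.1 hj with rfl | hj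
      · exact absurd hpj hi
      · exact hj

theorem Advances.sum_fin {x : ℕ → V} :
    ∀ {T : ℕ} (u : Fin T → ℕ), (∀ t : Fin T, Advances Φ Ψ K (u t) (x t) (x (t + 1))) →
      Advances Φ Ψ K (∑ t, u t) (x 0) (x T)
  | 0, _, _ => by simpa using Advances.refl (x 0)
  | T + 1, u, h => by
    rw [Fin.sum_univ_castSucc]
    exact (sum_fin (u ∘ Fin.castSucc) fun t => h t.castSucc).trans (h (Fin.last T))

theorem Advances.le_frobInner_mul {ι κ : Type*} [Fintype ι] [Fintype κ]
    {Θs Θ : Matrix ι κ ℝ} {u : ℕ} (hK : 0 ≤ K)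
    (h : Advances (frobInner Θs) (fun Θ => frobInner Θ Θ) K u 0 Θ) :
    (u : ℝ) ≤ frobInner Θs Θs * K := by
  obtain ⟨h₁, h₂⟩ := h
  simp only [frobInner_zero_right, zero_add] at h₁ h₂
  rcases (Nat.cast_nonneg u : (0 : ℝ) ≤ u).eq_or_lt with hu | hu
  · rw [← hu]
    exact mul_nonneg (frobInner_self_nonneg Θs) hK
  · refine le_of_mul_le_mul_right ?_ hu
    calc (u : ℝ) * u ≤ frobInner Θs Θ ^ 2 := by nlinarith
      _ ≤ frobInner Θs Θs * frobInner Θ Θ := frobInner_sq_le Θs Θ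
      _ ≤ frobInner Θs Θs * (u * K) :=
          mul_le_mul_of_nonneg_left h₂ (frobInner_self_nonneg Θs)
      _ = frobInner Θs Θs * K * u := by ring

end Advances

theorem two_add_sq_mul_le {σ m n : ℝ} (hm : 1 ≤ m) (hσm : 1 ≤ σ * m) (hmn : m + 1 ≤ n) :
    2 + σ ^ 2 * m ≤ 1 + σ ^ 2 * m ^ 2 * n := by
  nlinarith [mul_le_mul_of_nonneg_left hmn (sq_nonneg (σ * m)), sq_nonneg σ,
    mul_nonneg (sq_nonneg σ) (sub_nonneg.2 hm)]

theorem card_filter_le_sum {α : Type*} [Fintype α] (p : α → Prop) [DecidablePred p]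
    (u : α → ℕ) (h : ∀ a, p a → 1 ≤ u a) : (univ.filter p).card ≤ ∑ a, u a :=
  calc (univ.filter p).card = (univ.filter p).card • 1 := by simp
    _ ≤ ∑ a ∈ univ.filter p, u a :=
        card_nsmul_le_sum _ _ _ fun a ha => h a (mem_filter.1 ha).2
    _ ≤ ∑ a, u a := sum_le_sum_of_subset (filter_subset _ _)

/-- The per-sample content of the nondegeneracy, boundedness and separability assumptions. -/
structure WellPosed [NeZero n] (σb : ℝ) (Θs : Matrix (Fin n) (Fin d) ℝ) (D : Samp n m d)
    (xs : Fin n → ℝ) : Prop where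
  feasible : Feasible (AOf D) (bOf D) xs
  card_posSupport : (posSupport xs).card = m
  isUnit_det : IsUnit (subCols (AOf D) (enumOf (posSupport xs))).det
  sigmaMax_inv_le : sigmaMax (subCols (AOf D) (enumOf (posSupport xs)))⁻¹ ≤ σb
  abs_le_one : ∀ k i, |AOf D k i| ≤ 1
  l2norm_z_le : l2norm (zOf D) ≤ 1
  l2norm_le_of_feasible : ∀ x, Feasible (AOf D) (bOf D) x → l2norm x ≤ 1
  separated : ∀ i ∉ posSupport xs,
    1 ≤ reducedCost (Θs *ᵥ zOf D) (AOf D) (enumOf (posSupport xs)) i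

namespace WellPosed

variable [NeZero n] {σb : ℝ} {Θs : Matrix (Fin n) (Fin d) ℝ} {D : Samp n m d}
  {xs : Fin n → ℝ}

theorem of_nondeg_of_boundedD (hN : Nondeg D xs) (hB : BoundedD σb D xs)
    (hS : ∀ i ∉ posSupport xs,
      1 ≤ reducedCost (Θs *ᵥ zOf D) (AOf D) (enumOf (posSupport xs)) i) :
    WellPosed σb Θs D xs where
  feasible := hN.1.1
  card_posSupport := hN.2.2.2
  isUnit_det := hN.2.2.1 _ (injective_enumOf hN.2.2.2)
  sigmaMax_inv_le := hB.1
  abs_le_one := hB.2.2.1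
  l2norm_z_le := hB.2.1
  l2norm_le_of_feasible := hB.2.2.2.2.2
  separated := hS

theorem rows_le_cols (h : WellPosed σb Θs D xs) : m ≤ n := by
  simpa [h.card_posSupport] using card_le_univ (posSupport xs)

/-- With `m = 0` every `x ≥ 0` is feasible, which contradicts the unit-ball bound. -/
theorem rows_pos (h : WellPosed σb Θs D xs) : 0 < m := by
  by_contra! hm
  obtain rfl : m = 0 := Nat.le_zero.1 hm
  have hfeas : Feasible (AOf D) (bOf D) fun _ => 2 :=
    ⟨Subsingleton.elim _ _, fun _ => zero_le_two⟩
  have h2 : (2 : ℝ) ≤ l2norm fun _ : Fin n => (2 : ℝ) := by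
    refine Real.le_sqrt_of_sq_le ?_
    exact single_le_sum (f := fun _ : Fin n => (2 : ℝ) ^ 2) (fun _ _ => sq_nonneg _)
      (mem_univ ⟨0, Nat.pos_of_ne_zero (NeZero.ne n)⟩)
  linarith [h.l2norm_le_of_feasible _ hfeas]

theorem one_le_mul_rows (h : WellPosed σb Θs D xs) : 1 ≤ σb * m := by
  have : NeZero m := ⟨h.rows_pos.ne'⟩
  set M := subCols (AOf D) (enumOf (posSupport xs))
  have hM : sigmaMax M ≤ m :=
    calc sigmaMax M ≤ frob M := sigmaMax_le_frob M
      _ ≤ √(m * m) := by simpa using frob_le_of_abs_le_one M fun k l => h.abs_le_one k _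
      _ = m := Real.sqrt_mul_self (Nat.cast_nonneg m)
  have hσ : 0 ≤ σb := (norm_nonneg _).trans h.sigmaMax_inv_le
  calc (1 : ℝ) ≤ sigmaMax M⁻¹ * sigmaMax M := one_le_sigmaMax_inv_mul M h.isUnit_det
    _ ≤ σb * m := mul_le_mul h.sigmaMax_inv_le hM (norm_nonneg _) hσ

theorem injective (h : WellPosed σb Θs D xs) :
    Function.Injective (enumOf (posSupport xs) : Fin m → Fin n) :=
  injective_enumOf h.card_posSupport

theorem notMem_range (h : WellPosed σb Θs D xs) {i : Fin n} (hi : i ∉ posSupport xs) :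
    i ∉ Set.range (enumOf (posSupport xs) : Fin m → Fin n) := by
  rwa [range_enumOf h.card_posSupport]

theorem eq_of_isOptimal (h : WellPosed σb Θs D xs) {c x : Fin n → ℝ}
    (hrc : ∀ i ∉ posSupport xs, 0 < reducedCost c (AOf D) (enumOf (posSupport xs)) i)
    (hx : IsOptimal c (AOf D) (bOf D) x) : x = xs :=
  eq_of_isOptimal_of_reducedCost_pos h.feasible h.card_posSupport h.isUnit_det hrc hx

theorem eq_of_isOptimal_of_eq (h : WellPosed σb Θs D xs) (hmn : m = n) {c x : Fin n → ℝ}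
    (hx : IsOptimal c (AOf D) (bOf D) x) : x = xs := by
  have hB : posSupport xs = univ := eq_univ_of_card _ (by simp [h.card_posSupport, hmn])
  exact h.eq_of_isOptimal (fun i hi => absurd (hB ▸ mem_univ i) hi) hx

theorem frobInner_percW_self_le (h : WellPosed σb Θs D xs) {i : Fin n}
    (hi : i ∉ posSupport xs) :
    frobInner (percW D (enumOf (posSupport xs)) i) (percW D (enumOf (posSupport xs)) i) ≤
      1 + σb ^ 2 * m := by
  rw [frobInner_percW_self D _ i h.injective (h.notMem_range hi)]
  set v := basisCoords (AOf D) (enumOf (posSupport xs)) i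
  have hσ : 0 ≤ σb := (norm_nonneg _).trans h.sigmaMax_inv_le
  have hv : l2norm v ≤ σb * √m :=
    (l2norm_mulVec_le _ _).trans (mul_le_mul h.sigmaMax_inv_le
      (by simpa using l2norm_le_sqrt_card _ fun k => h.abs_le_one k i) (Real.sqrt_nonneg _) hσ)
  have hv2 : v ⬝ᵥ v ≤ σb ^ 2 * m := by
    rw [← l2norm_sq, ← Real.sq_sqrt (Nat.cast_nonneg m), ← mul_pow]
    exact pow_le_pow_left₀ (Real.sqrt_nonneg _) hv 2
  have hz : zOf D ⬝ᵥ zOf D ≤ 1 := by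
    rw [← l2norm_sq]
    exact pow_le_one₀ (Real.sqrt_nonneg _) h.l2norm_z_le
  have hv0 : 0 ≤ v ⬝ᵥ v := by
    rw [← l2norm_sq]
    positivity
  calc (1 + v ⬝ᵥ v) * (zOf D ⬝ᵥ zOf D) ≤ 1 + v ⬝ᵥ v :=
        mul_le_of_le_one_right (by positivity) hz
    _ ≤ 1 + σb ^ 2 * m := by linarith

theorem advances_percInner (h : WellPosed σb Θs D xs) (Θ : Matrix (Fin n) (Fin d) ℝ)
    {x : Fin n → ℝ} (hx : IsOptimal (Θ *ᵥ zOf D) (AOf D) (bOf D) x) :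
    ∃ u, Advances (frobInner Θs) (fun Θ => frobInner Θ Θ) (2 + σb ^ 2 * m) u Θ
      (percInner D xs Θ) ∧ (xs ≠ x → 1 ≤ u) := by
  have hstep : ∀ Θ i, (i ∉ posSupport xs ∧
      reducedCost (Θ *ᵥ zOf D) (AOf D) (enumOf (posSupport xs)) i ≤ 1 / 2) →
      Advances (frobInner Θs) (fun Θ => frobInner Θ Θ) (2 + σb ^ 2 * m) 1 Θ
        (Θ + percW D (enumOf (posSupport xs)) i) := by
    rintro Θ i ⟨hi, hrc⟩
    have hW := frobInner_percW D _ i h.injective (h.notMem_range hi)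
    constructor
    · rw [frobInner_add_right, hW, Nat.cast_one]
      linarith [h.separated i hi]
    · dsimp only
      rw [frobInner_add_self, hW, Nat.cast_one]
      linarith [h.frobInner_percW_self_le hi]
  obtain ⟨u, hu, hfire⟩ := Advances.foldl_ite _ _ hstep (List.finRange n) Θ
  refine ⟨u, hu, fun hne => hfire ?_⟩
  by_contra! hnone
  exact hne (h.eq_of_isOptimal (fun i hi =>
    one_half_pos.trans (hnone i (List.mem_finRange i) hi)) hx).symm

end WellPosed

section Iterates

variable [NeZero n] (xstar : Samp n m d → Fin n → ℝ) {T : ℕ} (Ds : Fin T → Samp n m d)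

theorem percIter_zero : percIter xstar Ds 0 = 0 := rfl

theorem percIter_succ (t : Fin T) :
    percIter xstar Ds (t + 1) = percInner (Ds t) (xstar (Ds t)) (percIter xstar Ds t) := by
  rw [percIter, dif_pos t.2]

end Iterates

/-- mistake bound of the optimality-driven perceptron:
    #{t : x*_t ≠ x_t} ≤ Θ̄² + σ̄²Θ̄²m²n, independently of T. -/
theorem perceptron_mistake_bound
    [NeZero n]
    (P : Measure (Samp n m d)) [IsProbabilityMeasure P]
    (xstar : Samp n m d → Fin n → ℝ)
    (σb Θb : ℝ)
    (h_nondeg : ∀ᵐ D ∂P, Nondeg D (xstar D))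
    (h_bdd : ∀ᵐ D ∂P, BoundedD σb D (xstar D))
    (h_sep : ∃ Θs : Matrix (Fin n) (Fin d) ℝ, frob Θs ≤ Θb ∧
      ∀ᵐ D ∂P, ∀ i ∉ posSupport (xstar D),
        1 ≤ reducedCost (Θs.mulVec (zOf D)) (AOf D) (enumOf (posSupport (xstar D))) i)
    (T : ℕ)
    (xsel : (Fin T → Samp n m d) → Fin T → Fin n → ℝ)
    (h_xsel : ∀ᵐ Ds ∂(Measure.pi fun _ : Fin T => P), ∀ t : Fin T,
      IsOptimal ((percIter xstar Ds t.1).mulVec (zOf (Ds t)))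
        (AOf (Ds t)) (bOf (Ds t)) (xsel Ds t)) :
    ∀ᵐ Ds ∂(Measure.pi fun _ : Fin T => P),
      ((Finset.univ.filter (fun t : Fin T => xstar (Ds t) ≠ xsel Ds t)).card : ℝ) ≤
        Θb ^ 2 + σb ^ 2 * Θb ^ 2 * m ^ 2 * n := by
  obtain ⟨Θs, hΘs, h_sep⟩ := h_sep
  have hwp : ∀ᵐ D ∂P, WellPosed σb Θs D (xstar D) := by
    filter_upwards [h_nondeg, h_bdd, h_sep] with D hN hB hS
    exact .of_nondeg_of_boundedD hN hB hS
  obtain ⟨D₀, hD₀⟩ := hwp.exists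
  have hwp_pi : ∀ᵐ Ds ∂(Measure.pi fun _ : Fin T => P),
      ∀ t, WellPosed σb Θs (Ds t) (xstar (Ds t)) :=
    ae_all_iff.2 fun t =>
      (Measure.tendsto_eval_ae_ae (μ := fun _ : Fin T => P) (i := t)).eventually hwp
  filter_upwards [hwp_pi, h_xsel] with Ds hwp hsel
  rcases hD₀.rows_le_cols.eq_or_lt with hmn | hmn
  · rw [filter_false_of_mem fun t _ => not_not.2 ((hwp t).eq_of_isOptimal_of_eq hmn (hsel t)).symm,
      card_empty, Nat.cast_zero]
    positivity
  choose u hadv hmis using fun t => (hwp t).advances_percInner (percIter xstar Ds t) (hsel t)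
  have htotal := Advances.sum_fin u fun t => percIter_succ xstar Ds t ▸ hadv t
  rw [percIter_zero] at htotal
  have hΘs2 : frobInner Θs Θs ≤ Θb ^ 2 :=
    frob_sq Θs ▸ pow_le_pow_left₀ (Real.sqrt_nonneg _) hΘs 2
  have hm : (1 : ℝ) ≤ m := Nat.one_le_cast.2 hD₀.rows_pos
  calc _ ≤ ((∑ t, u t : ℕ) : ℝ) := Nat.cast_le.2 (card_filter_le_sum _ u hmis)
    _ ≤ frobInner Θs Θs * (2 + σb ^ 2 * m) := htotal.le_frobInner_mul (by positivity)
    _ ≤ Θb ^ 2 * (1 + σb ^ 2 * m ^ 2 * n) :=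
        mul_le_mul hΘs2 (two_add_sq_mul_le hm hD₀.one_le_mul_rows (by exact_mod_cast hmn))
          (by positivity) (sq_nonneg _)
    _ = Θb ^ 2 + σb ^ 2 * Θb ^ 2 * m ^ 2 * n := by ring

end MOMPaper
end

section
/- Assume c = Θ* z + ε with E[ε | z] = 0, where Θ* ∈ ℝ^{n×d} is the true coefficient matrix, and let α be a real random variable independent of z and c. Let (z_t, (1+α_t) c_t), t = 1, 2, ..., be i.i.d. observations, where z_t, c_t, α_t have finite second moments and c_t and α_t have finite fourth moments, and assume Σ = E[z z^T] is nonsingular. Let Θ̂_T be a minimizer over Θ ∈ ℝ^{n×d} of the ordinary least squares objective f_T(Θ) = (1/T) Σ_{t=1}^T ‖(1+α_t) c_t − Θ z_t‖₂². Then Θ̂_T → (1 + E[α]) Θ* almost surely as T → ∞. -/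
/-!
An OLS minimizer satisfies the normal equations `Θ̂_T S_T = B_T`, where
`S_T = T⁻¹ ∑ z_t z_tᵀ` and `B_T = T⁻¹ ∑ (1 + α_t) c_t z_tᵀ`. By the strong law of large numbers
`S_T → Σ` and `B_T → E[(1 + α) c zᵀ]` almost surely, and the latter equals `(1 + E α) Θ* Σ`:
α is independent of `(z, c)`, and `E[ε zᵀ] = 0` because `E[ε | z] = 0`. As `Σ` is invertible, so
is `S_T` for large `T`, whence `Θ̂_T = B_T S_T⁻¹ → (1 + E α) Θ*`.
-/

open MeasureTheory Matrix Finset ProbabilityTheory Filter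

namespace MOMPaper

open scoped Topology

section LeastSquares

variable {ι m n : Type*} [Fintype m] [Fintype n]

def leastSquaresLoss (s : Finset ι) (a : ι → m → ℝ) (z : ι → n → ℝ) (Θ : Matrix m n ℝ) :
    ℝ :=
  ∑ t ∈ s, ∑ i, (a t i - (Θ *ᵥ z t) i) ^ 2

lemma sum_sq_sub_mulVec_add_smul (a : m → ℝ) (z : n → ℝ) (M D : Matrix m n ℝ) (x : ℝ) :
    ∑ i, (a i - ((M + x • D) *ᵥ z) i) ^ 2 =
      ∑ i, (a i - (M *ᵥ z) i) ^ 2 - 2 * x * ∑ i, (a i - (M *ᵥ z) i) * (D *ᵥ z) i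
        + x ^ 2 * ∑ i, (D *ᵥ z) i ^ 2 := by
  simp only [add_mulVec, smul_mulVec, Pi.add_apply, Pi.smul_apply, smul_eq_mul, mul_sum,
    ← sum_sub_distrib, ← sum_add_distrib]
  exact sum_congr rfl fun i _ => by ring

lemma sum_residual_mul_mulVec_eq_zero {s : Finset ι} {a : ι → m → ℝ} {z : ι → n → ℝ}
    {M : Matrix m n ℝ}
    (hmin : ∀ Θ, leastSquaresLoss s a z M ≤ leastSquaresLoss s a z Θ)
    (D : Matrix m n ℝ) :
    ∑ t ∈ s, ∑ i, (a t i - (M *ᵥ z t) i) * (D *ᵥ z t) i = 0 := by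
  set L := ∑ t ∈ s, ∑ i, (a t i - (M *ᵥ z t) i) * (D *ᵥ z t) i
  set Q := ∑ t ∈ s, ∑ i, (D *ᵥ z t) i ^ 2
  -- Along `M + x • D` the loss exceeds its minimum by `Q x² - 2 L x ≥ 0`, so `4 L² ≤ 0`.
  have hquad : ∀ x : ℝ, 0 ≤ Q * (x * x) + (-2 * L) * x + 0 := fun x => by
    have h := hmin (M + x • D)
    simp only [leastSquaresLoss, sum_sq_sub_mulVec_add_smul, sum_add_distrib, sum_sub_distrib,
      ← mul_sum] at h
    linarith
  have h := discrim_le_zero hquad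
  rw [discrim] at h
  nlinarith [sq_nonneg L]

lemma mul_sum_vecMulVec_eq_of_forall_leastSquaresLoss_le [DecidableEq m] [DecidableEq n]
    {s : Finset ι} {a : ι → m → ℝ} {z : ι → n → ℝ} {M : Matrix m n ℝ}
    (hmin : ∀ Θ, leastSquaresLoss s a z M ≤ leastSquaresLoss s a z Θ) :
    M * ∑ t ∈ s, vecMulVec (z t) (z t) = ∑ t ∈ s, vecMulVec (a t) (z t) := by
  ext k l
  have h := sum_residual_mul_mulVec_eq_zero hmin (single k l 1)
  simp only [single_mulVec, one_mul, Function.update_apply, Pi.zero_apply, mul_ite, mul_zero,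
    sum_ite_eq', mem_univ, if_true, sub_mul, sum_sub_distrib] at h
  simp only [Matrix.mul_sum, mul_vecMulVec, Matrix.sum_apply, vecMulVec_apply]
  linarith

end LeastSquares

lemma tendsto_of_mul_eq_of_tendsto {α m n : Type*} [Fintype n] [DecidableEq n] {l : Filter α}
    {M : α → Matrix m n ℝ} {S : α → Matrix n n ℝ} {B : α → Matrix m n ℝ}
    {S₀ : Matrix n n ℝ} {B₀ : Matrix m n ℝ}
    (hS : Tendsto S l (𝓝 S₀)) (hS₀ : IsUnit S₀.det) (hB : Tendsto B l (𝓝 B₀))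
    (hMSB : ∀ᶠ x in l, M x * S x = B x) :
    Tendsto M l (𝓝 (B₀ * S₀⁻¹)) := by
  have hinv : Tendsto (fun x => (S x)⁻¹) l (𝓝 S₀⁻¹) :=
    (continuousAt_matrix_inv S₀ (by
      simpa [Ring.inverse_eq_inv'] using continuousAt_inv₀ hS₀.ne_zero)).tendsto.comp hS
  have hdet : ∀ᶠ x in l, IsUnit (S x).det :=
    (((continuous_id.matrix_det).tendsto S₀).comp hS).eventually
      (isOpen_ne.mem_nhds hS₀.ne_zero) |>.mono fun _ h => h.isUnit
  refine ((continuous_fst.matrix_mul continuous_snd).tendsto (B₀, S₀⁻¹)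
    |>.comp (hB.prodMk_nhds hinv)).congr' ?_
  filter_upwards [hMSB, hdet] with x hx hx'
  simp [← hx, mul_nonsing_inv_cancel_right _ _ hx']

lemma ae_tendsto_average_matrix {Ω β m n : Type*} [MeasurableSpace Ω] {μ : Measure Ω}
    [MeasurableSpace β] [Countable m] [Countable n]
    {X : ℕ → Ω → β} (hindep : iIndepFun X μ) (hident : ∀ t, IdentDistrib (X t) (X 0) μ μ)
    (g : β → Matrix m n ℝ) (hg : ∀ i j, Measurable fun b => g b i j)
    (hint : ∀ i j, Integrable (fun ω => g (X 0 ω) i j) μ) {L : Matrix m n ℝ}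
    (hmean : ∀ i j, ∫ ω, g (X 0 ω) i j ∂μ = L i j) :
    ∀ᵐ ω ∂μ, Tendsto (fun T : ℕ => (T : ℝ)⁻¹ • ∑ t ∈ range T, g (X t ω)) atTop (𝓝 L) := by
  have hentry : ∀ i j, ∀ᵐ ω ∂μ, Tendsto (fun T : ℕ => (∑ t ∈ range T, g (X t ω) i j) / T)
      atTop (𝓝 (∫ ω, g (X 0 ω) i j ∂μ)) := fun i j =>
    strong_law_ae_real (fun t ω => g (X t ω) i j) (hint i j)
      (fun _ _ hst => (hindep.indepFun hst).comp (hg i j) (hg i j))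
      (fun t => (hident t).comp (hg i j))
  filter_upwards [ae_all_iff.2 fun i => ae_all_iff.2 (hentry i)] with ω hω
  refine tendsto_pi_nhds.2 fun i => tendsto_pi_nhds.2 fun j => ?_
  simpa [Matrix.sum_apply, div_eq_inv_mul, hmean] using hω i j

lemma integral_mul_eq_zero_of_condExp_eq_zero {Ω : Type*} {m m₀ : MeasurableSpace Ω}
    {μ : Measure[m₀] Ω} [IsFiniteMeasure μ] (hm : m ≤ m₀) {f g : Ω → ℝ}
    (hf : StronglyMeasurable[m] f) (hfg : Integrable (f * g) μ) (hg : Integrable g μ)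
    (hcond : μ[g | m] =ᵐ[μ] 0) :
    ∫ ω, f ω * g ω ∂μ = 0 := by
  have hpull : μ[f * g | m] =ᵐ[μ] 0 := by
    filter_upwards [condExp_mul_of_stronglyMeasurable_left hf hfg hg, hcond] with ω h h'
    simp [h, h']
  rw [← Pi.mul_def, ← integral_condExp hm, integral_congr_ae hpull]
  simp

section Moments

variable {Ω : Type*} [MeasurableSpace Ω] {μ : Measure Ω}

noncomputable def secondMomentMatrix {n : Type*} (μ : Measure Ω) (z : Ω → n → ℝ) :
    Matrix n n ℝ :=
  of fun i j => ∫ ω, z ω i * z ω j ∂μ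

lemma integral_mul_eq_mul_secondMomentMatrix [IsFiniteMeasure μ] {m n : Type*} [Fintype n]
    {z : Ω → n → ℝ} {c ε : Ω → m → ℝ} {Θ : Matrix m n ℝ} (hz : Measurable z)
    (hmodel : ∀ ω, c ω = Θ *ᵥ z ω + ε ω)
    (hcond : ∀ i, μ[fun ω => ε ω i | MeasurableSpace.comap z inferInstance] =ᵐ[μ] 0)
    (hz2 : ∀ j, MemLp (fun ω => z ω j) 2 μ) (hc2 : ∀ i, MemLp (fun ω => c ω i) 2 μ)
    (i : m) (j : n) :
    ∫ ω, c ω i * z ω j ∂μ = (Θ * secondMomentMatrix μ z) i j := by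
  have hε : ∀ ω, ε ω i = c ω i - ∑ k, Θ i k * z ω k := fun ω => by
    simp [hmodel, mulVec, dotProduct]
  have hε2 : MemLp (fun ω => ε ω i) 2 μ := by
    simp only [hε]
    exact (hc2 i).sub (memLp_finsetSum _ fun k _ => (hz2 k).const_mul _)
  have hzε_int : Integrable (fun ω => z ω j * ε ω i) μ := (hz2 j).integrable_mul hε2
  have hzε : ∫ ω, z ω j * ε ω i ∂μ = 0 :=
    integral_mul_eq_zero_of_condExp_eq_zero hz.comap_le
      ((measurable_pi_apply j).comp (comap_measurable z)).stronglyMeasurable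
      hzε_int (hε2.integrable one_le_two) (hcond i)
  have hzz : ∀ k, Integrable (fun ω => Θ i k * (z ω k * z ω j)) μ := fun k =>
    ((hz2 k).integrable_mul (hz2 j)).const_mul _
  calc ∫ ω, c ω i * z ω j ∂μ
      = ∫ ω, (∑ k, Θ i k * (z ω k * z ω j)) + z ω j * ε ω i ∂μ := by
        refine integral_congr_ae (.of_forall fun ω => ?_)
        simp only [hmodel, Pi.add_apply, mulVec, dotProduct, add_mul, sum_mul, mul_assoc,
          mul_comm (ε ω i)]
    _ = (Θ * secondMomentMatrix μ z) i j := by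
        rw [integral_add (integrable_finsetSum _ fun k _ => hzz k)
          hzε_int, integral_finsetSum _ fun k _ => hzz k, hzε, add_zero]
        simp [mul_apply, secondMomentMatrix, integral_const_mul]

lemma integrable_one_add_mul_of_indepFun [IsFiniteMeasure μ] {Y α : Ω → ℝ}
    (hindep : IndepFun Y α μ)
    (hY : Integrable Y μ) (hα : Integrable α μ) :
    Integrable (fun ω => (1 + α ω) * Y ω) μ :=
  (hindep.symm.comp (measurable_const.add measurable_id) measurable_id).integrable_mul
    ((integrable_const 1).add hα) hY

lemma integral_one_add_mul_of_indepFun [IsProbabilityMeasure μ] {Y α : Ω → ℝ}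
    (hindep : IndepFun Y α μ) (hY : AEStronglyMeasurable Y μ) (hα : Integrable α μ) :
    ∫ ω, (1 + α ω) * Y ω ∂μ = (1 + ∫ ω, α ω ∂μ) * ∫ ω, Y ω ∂μ := by
  have h1α : IndepFun (fun ω => 1 + α ω) Y μ :=
    hindep.symm.comp (measurable_const.add measurable_id) measurable_id
  refine (h1α.integral_mul_eq_mul_integral (aestronglyMeasurable_const.add hα.1) hY).trans ?_
  rw [integral_add (integrable_const 1) hα, integral_const, probReal_univ, one_smul]

lemma integrable_one_add_mul_mul_of_indepFun [IsFiniteMeasure μ] {m n : Type*}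
    {z : Ω → n → ℝ} {c : Ω → m → ℝ} {α : Ω → ℝ} (hindep : IndepFun (fun ω => (z ω, c ω)) α μ)
    (hz2 : ∀ j, MemLp (fun ω => z ω j) 2 μ) (hc2 : ∀ i, MemLp (fun ω => c ω i) 2 μ)
    (hα : Integrable α μ) (i : m) (j : n) :
    Integrable (fun ω => (1 + α ω) * c ω i * z ω j) μ := by
  have hcz : IndepFun (fun ω => c ω i * z ω j) α μ :=
    hindep.comp (φ := fun p : (n → ℝ) × (m → ℝ) => p.2 i * p.1 j) (by fun_prop) measurable_id
  simpa only [mul_assoc] using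
    integrable_one_add_mul_of_indepFun hcz ((hc2 i).integrable_mul (hz2 j)) hα

lemma integral_one_add_mul_mul_of_linear_model [IsProbabilityMeasure μ] {m n : Type*}
    [Fintype n] {z : Ω → n → ℝ} {c ε : Ω → m → ℝ} {α : Ω → ℝ} {Θ : Matrix m n ℝ}
    (hz : Measurable z) (hmodel : ∀ ω, c ω = Θ *ᵥ z ω + ε ω)
    (hcond : ∀ i, μ[fun ω => ε ω i | MeasurableSpace.comap z inferInstance] =ᵐ[μ] 0)
    (hindep : IndepFun (fun ω => (z ω, c ω)) α μ)
    (hz2 : ∀ j, MemLp (fun ω => z ω j) 2 μ) (hc2 : ∀ i, MemLp (fun ω => c ω i) 2 μ)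
    (hα : Integrable α μ) (i : m) (j : n) :
    ∫ ω, (1 + α ω) * c ω i * z ω j ∂μ =
      (1 + ∫ ω, α ω ∂μ) * (Θ * secondMomentMatrix μ z) i j := by
  have hcz : IndepFun (fun ω => c ω i * z ω j) α μ :=
    hindep.comp (φ := fun p : (n → ℝ) × (m → ℝ) => p.2 i * p.1 j) (by fun_prop) measurable_id
  simp only [mul_assoc]
  rw [integral_one_add_mul_of_indepFun hcz ((hc2 i).integrable_mul (hz2 j)).1 hα,
    integral_mul_eq_mul_secondMomentMatrix hz hmodel hcond hz2 hc2]

end Moments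

theorem ols_scale_consistency_general
    {n d : ℕ} {Ω : Type*} [MeasurableSpace Ω]
    (μ : Measure Ω) [IsProbabilityMeasure μ]
    (zs : ℕ → Ω → Fin d → ℝ) (cs : ℕ → Ω → Fin n → ℝ)
    (εs : ℕ → Ω → Fin n → ℝ) (αs : ℕ → Ω → ℝ)
    (Θstar : Matrix (Fin n) (Fin d) ℝ)
    (hmeas : ∀ t, Measurable (fun ω => (zs t ω, cs t ω, αs t ω)))
    (hmodel : ∀ t ω, cs t ω = Θstar.mulVec (zs t ω) + εs t ω)
    (hcond : ∀ t i,
      μ[(fun ω => εs t ω i) | MeasurableSpace.comap (zs t) inferInstance] =ᵐ[μ] 0)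
    (hindepα : ∀ t, IndepFun (fun ω => (zs t ω, cs t ω)) (αs t) μ)
    (hiid_indep : iIndepFun
      (fun t ω => (zs t ω, cs t ω, αs t ω)) μ)
    (hiid_ident : ∀ t, IdentDistrib (fun ω => (zs t ω, cs t ω, αs t ω))
      (fun ω => (zs 0 ω, cs 0 ω, αs 0 ω)) μ μ)
    (hz2 : ∀ t i, MemLp (fun ω => zs t ω i) 2 μ)
    (hc2 : ∀ t i, MemLp (fun ω => cs t ω i) 2 μ)
    (hα2 : ∀ t, MemLp (αs t) 2 μ)
    (hSig : IsUnit (Matrix.of fun i j => ∫ ω, zs 0 ω i * zs 0 ω j ∂μ).det)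
    (Θhat : ℕ → Ω → Matrix (Fin n) (Fin d) ℝ)
    (hmin : ∀ T : ℕ, 0 < T → ∀ ω, ∀ Θ : Matrix (Fin n) (Fin d) ℝ,
      (1 / (T : ℝ)) * ∑ t ∈ Finset.range T,
          ∑ i, ((1 + αs t ω) * cs t ω i - ((Θhat T ω).mulVec (zs t ω)) i) ^ 2 ≤
        (1 / (T : ℝ)) * ∑ t ∈ Finset.range T,
          ∑ i, ((1 + αs t ω) * cs t ω i - (Θ.mulVec (zs t ω)) i) ^ 2) :
    ∀ᵐ ω ∂μ, Tendsto (fun T => Θhat T ω) atTop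
      (nhds ((1 + ∫ ω', αs 0 ω' ∂μ) • Θstar)) := by
  have hdet : IsUnit (secondMomentMatrix μ (zs 0)).det := hSig
  have hα : Integrable (αs 0) μ := (hα2 0).integrable one_le_two
  have hS : ∀ᵐ ω ∂μ, Tendsto
      (fun T : ℕ => (T : ℝ)⁻¹ • ∑ t ∈ range T, vecMulVec (zs t ω) (zs t ω))
      atTop (𝓝 (secondMomentMatrix μ (zs 0))) :=
    ae_tendsto_average_matrix hiid_indep hiid_ident
      (fun p : (Fin d → ℝ) × (Fin n → ℝ) × ℝ => vecMulVec p.1 p.1)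
      (fun i j => by simp only [vecMulVec_apply]; fun_prop)
      (fun i j => (hz2 0 i).integrable_mul (hz2 0 j)) (fun i j => rfl)
  have hB : ∀ᵐ ω ∂μ, Tendsto
      (fun T : ℕ => (T : ℝ)⁻¹ • ∑ t ∈ range T, vecMulVec ((1 + αs t ω) • cs t ω) (zs t ω))
      atTop (𝓝 ((1 + ∫ ω, αs 0 ω ∂μ) • (Θstar * secondMomentMatrix μ (zs 0)))) :=
    ae_tendsto_average_matrix hiid_indep hiid_ident
      (fun p : (Fin d → ℝ) × (Fin n → ℝ) × ℝ => vecMulVec ((1 + p.2.2) • p.2.1) p.1)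
      (fun i j => by simp only [vecMulVec_apply, Pi.smul_apply, smul_eq_mul]; fun_prop)
      (integrable_one_add_mul_mul_of_indepFun (hindepα 0) (hz2 0) (hc2 0) hα)
      (integral_one_add_mul_mul_of_linear_model (measurable_fst.comp (hmeas 0)) (hmodel 0)
        (hcond 0) (hindepα 0) (hz2 0) (hc2 0) hα)
  filter_upwards [hS, hB] with ω hSω hBω
  have hnormal : ∀ᶠ T : ℕ in atTop,
      Θhat T ω * ((T : ℝ)⁻¹ • ∑ t ∈ range T, vecMulVec (zs t ω) (zs t ω)) =
        (T : ℝ)⁻¹ • ∑ t ∈ range T, vecMulVec ((1 + αs t ω) • cs t ω) (zs t ω) := by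
    filter_upwards [eventually_gt_atTop 0] with T hT
    rw [Matrix.mul_smul, mul_sum_vecMulVec_eq_of_forall_leastSquaresLoss_le fun Θ =>
      (mul_le_mul_iff_right₀ (by positivity)).1 (hmin T hT ω Θ)]
    rfl
  have h := tendsto_of_mul_eq_of_tendsto hSω hdet hBω hnormal
  rwa [smul_mul, mul_nonsing_inv_cancel_right _ _ hdet] at h

/-- scale consistency of ordinary least squares. With i.i.d.
    observations (z_t, (1+α_t)c_t) from the model c = Θ* z + ε, E[ε|z] = 0,
    scale noise α independent of (z,c), suitable moments, and nonsingular
    Σ = E[zzᵀ], any sequence of OLS minimizers Θ̂_T converges a.s. to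
    (1 + E[α]) Θ*. -/
theorem ols_scale_consistency
    {n d : ℕ} {Ω : Type*} [MeasurableSpace Ω]
    (μ : Measure Ω) [IsProbabilityMeasure μ]
    (zs : ℕ → Ω → Fin d → ℝ) (cs : ℕ → Ω → Fin n → ℝ)
    (εs : ℕ → Ω → Fin n → ℝ) (αs : ℕ → Ω → ℝ)
    (Θstar : Matrix (Fin n) (Fin d) ℝ)
    (hmeas : ∀ t, Measurable (fun ω => (zs t ω, cs t ω, αs t ω)))
    (hmodel : ∀ t ω, cs t ω = Θstar.mulVec (zs t ω) + εs t ω)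
    (hcond : ∀ t i,
      μ[(fun ω => εs t ω i) | MeasurableSpace.comap (zs t) inferInstance] =ᵐ[μ] 0)
    (hindepα : ∀ t, IndepFun (fun ω => (zs t ω, cs t ω)) (αs t) μ)
    (hiid_indep : iIndepFun
      (fun t ω => (zs t ω, cs t ω, αs t ω)) μ)
    (hiid_ident : ∀ t, IdentDistrib (fun ω => (zs t ω, cs t ω, αs t ω))
      (fun ω => (zs 0 ω, cs 0 ω, αs 0 ω)) μ μ)
    (hz2 : ∀ t i, MemLp (fun ω => zs t ω i) 2 μ)
    (hc2 : ∀ t i, MemLp (fun ω => cs t ω i) 2 μ)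
    (hα2 : ∀ t, MemLp (αs t) 2 μ)
    (hc4 : ∀ t i, MemLp (fun ω => cs t ω i) 4 μ)
    (hα4 : ∀ t, MemLp (αs t) 4 μ)
    (hSig : IsUnit (Matrix.of fun i j => ∫ ω, zs 0 ω i * zs 0 ω j ∂μ).det)
    (Θhat : ℕ → Ω → Matrix (Fin n) (Fin d) ℝ)
    (hmin : ∀ T : ℕ, 0 < T → ∀ ω, ∀ Θ : Matrix (Fin n) (Fin d) ℝ,
      (1 / (T : ℝ)) * ∑ t ∈ Finset.range T,
          ∑ i, ((1 + αs t ω) * cs t ω i - ((Θhat T ω).mulVec (zs t ω)) i) ^ 2 ≤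
        (1 / (T : ℝ)) * ∑ t ∈ Finset.range T,
          ∑ i, ((1 + αs t ω) * cs t ω i - (Θ.mulVec (zs t ω)) i) ^ 2) :
    ∀ᵐ ω ∂μ, Tendsto (fun T => Θhat T ω) atTop
      (nhds ((1 + ∫ ω', αs 0 ω' ∂μ) • Θstar)) :=
  ols_scale_consistency_general μ zs cs εs αs Θstar hmeas hmodel hcond hindepα hiid_indep hiid_ident
    hz2 hc2 hα2 hSig Θhat hmin

end MOMPaper
end
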